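/- Each u_{n,i} = Σ_{j=i}^{n} P_{j-1}∂ⱼ is a Lie ideal of the Lie algebra u_n of unitriangular polynomial derivations. -/

import Mathlib

open MvPolynomial

noncomputable section

/-- The polynomial algebra `Pₙ = K[x₀,…,x_{n-1}]`. -/
abbrev Pn (K : Type) [Field K] (n : ℕ) : Type := MvPolynomial (Fin n) K

/-- The Lie algebra of `K`-derivations of `Pₙ`. -/
abbrev DerPn (K : Type) [Field K] (n : ℕ) : Type :=
  Derivation K (Pn K n) (Pn K n)

/-- The subalgebra `P_j = K[x₀,…,x_{j-1}]` of `Pₙ` (0-indexed: variables with index `< j`). -/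
def Psub (K : Type) [Field K] (n j : ℕ) : Subalgebra K (Pn K n) :=
  MvPolynomial.supported K {k : Fin n | (k : ℕ) < j}

/-- The subspace `u_{n,i} = Σ_{j=i}^n P_{j-1}∂_j` (1-indexed `i`; `U K n 1 = u_n`).
A derivation `D` lies in it iff `D(x_j) ∈ P_{j-1}` for all `j` and `D(x_j) = 0` for `j < i`
(0-indexed: `D (X j) = 0` when `(j:ℕ)+1 < i`). -/
def U (K : Type) [Field K] (n i : ℕ) : Submodule K (DerPn K n) where
  carrier := {D | ∀ j : Fin n, D (X j) ∈ Psub K n j ∧ ((j : ℕ) + 1 < i → D (X j) = 0)}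
  add_mem' := by
    intro a b ha hb j
    refine ⟨?_, fun h => ?_⟩
    · simpa using Subalgebra.add_mem _ (ha j).1 (hb j).1
    · simp [(ha j).2 h, (hb j).2 h]
  zero_mem' := by
    intro j
    refine ⟨by simpa using (Psub K n j).zero_mem, fun _ => rfl⟩
  smul_mem' := by
    intro c a ha j
    refine ⟨?_, fun h => ?_⟩
    · simpa using Subalgebra.smul_mem _ (ha j).1 c
    · simp [(ha j).2 h]

/-- The span of all brackets `⁅a,b⁆` with `a ∈ A`, `b ∈ B`. -/
def lieSpan (K : Type) [Field K] (n : ℕ) (A B : Submodule K (DerPn K n)) :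
    Submodule K (DerPn K n) :=
  Submodule.span K {x | ∃ a ∈ A, ∃ b ∈ B, x = ⁅a, b⁆}

/-- The derived series of a subspace `G`: `G_{(0)} = G`, `G_{(i+1)} = [G_{(i)}, G_{(i)}]`. -/
def derivedSub (K : Type) [Field K] (n : ℕ) (G : Submodule K (DerPn K n)) : ℕ → Submodule K (DerPn K n)
  | 0 => G
  | i + 1 => lieSpan K n (derivedSub K n G i) (derivedSub K n G i)

/-!
If `D ∈ u_n` then `D(x_k) ∈ P_{k-1} ⊆ P_m` for all `k ≤ m`, so `D` maps every `P_m` into itself;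
if `D ∈ u_{n,i}` then `D` kills `x_1, …, x_{i-1}`, hence all of `P_{i-1}`. For `a ∈ u_n`,
`b ∈ u_{n,i}`, both terms of `⁅a, b⁆(x_j) = a(b x_j) - b(a x_j)` therefore lie in `P_{j-1}`, and
for `j < i` both vanish: `b x_j = 0`, and `a x_j ∈ P_{j-1} ⊆ P_{i-1}`.
-/

theorem Derivation.map_mem_adjoin {R A : Type*} [CommSemiring R] [CommSemiring A] [Algebra R A]
    (D : Derivation R A A) {s : Set A} (h : ∀ x ∈ s, D x ∈ Algebra.adjoin R s) {a : A}
    (ha : a ∈ Algebra.adjoin R s) : D a ∈ Algebra.adjoin R s := by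
  induction ha using Algebra.adjoin_induction with
  | mem x hx => exact h x hx
  | algebraMap r => simp
  | add x y _ _ hx hy => rw [map_add]; exact add_mem hx hy
  | mul x y hx hy hDx hDy =>
    rw [Derivation.leibniz, smul_eq_mul, smul_eq_mul]
    exact add_mem (mul_mem hx hDy) (mul_mem hy hDx)

namespace MvPolynomial

variable {R σ : Type*} [CommSemiring R]

theorem derivation_mem_supported (D : Derivation R (MvPolynomial σ R) (MvPolynomial σ R))
    {s : Set σ} (h : ∀ i ∈ s, D (X i) ∈ supported R s) {f : MvPolynomial σ R}
    (hf : f ∈ supported R s) : D f ∈ supported R s :=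
  D.map_mem_adjoin (Set.forall_mem_image.2 h) hf

theorem derivation_eq_zero_of_mem_supported {A : Type*} [AddCommMonoid A] [Module R A]
    [Module (MvPolynomial σ R) A] [IsScalarTower R (MvPolynomial σ R) A]
    {D : Derivation R (MvPolynomial σ R) A} {s : Set σ} (h : ∀ i ∈ s, D (X i) = 0)
    {f : MvPolynomial σ R} (hf : f ∈ supported R s) : D f = 0 :=
  derivation_eqOn_supported (D₂ := 0) h hf

end MvPolynomial

section Unitriangular

variable {K : Type} [Field K] {n : ℕ}

theorem Psub_mono {a b : ℕ} (h : a ≤ b) : Psub K n a ≤ Psub K n b :=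
  supported_mono fun _ hk => hk.trans_le h

theorem U_le_U_one (i : ℕ) : U K n i ≤ U K n 1 :=
  fun _ hD j => ⟨(hD j).1, fun h => by omega⟩

theorem map_mem_Psub_of_mem_U_one {D : DerPn K n} (hD : D ∈ U K n 1) {j : ℕ} {p : Pn K n}
    (hp : p ∈ Psub K n j) : D p ∈ Psub K n j :=
  derivation_mem_supported D (fun k hk => Psub_mono (le_of_lt hk) (hD k).1) hp

theorem map_eq_zero_of_mem_U {D : DerPn K n} {i j : ℕ} (hD : D ∈ U K n i) (hj : j < i)
    {p : Pn K n} (hp : p ∈ Psub K n j) : D p = 0 :=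
  derivation_eq_zero_of_mem_supported (fun k hk => (hD k).2 (by have : (k : ℕ) < j := hk; omega)) hp

theorem lie_mem_U {a b : DerPn K n} {i : ℕ} (ha : a ∈ U K n 1) (hb : b ∈ U K n i) :
    ⁅a, b⁆ ∈ U K n i := by
  intro j
  rw [Derivation.commutator_apply]
  refine ⟨sub_mem (map_mem_Psub_of_mem_U_one ha (hb j).1)
    (map_mem_Psub_of_mem_U_one (U_le_U_one i hb) (ha j).1), fun hj => ?_⟩
  rw [(hb j).2 hj, map_zero, map_eq_zero_of_mem_U hb (by omega) (ha j).1, sub_zero]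

end Unitriangular

theorem U_isLieIdeal_general (K : Type) [Field K] (n : ℕ)
    (i : ℕ) :
    U K n i ≤ U K n 1 ∧ lieSpan K n (U K n 1) (U K n i) ≤ U K n i := by
  refine ⟨U_le_U_one i, Submodule.span_le.2 ?_⟩
  rintro _ ⟨a, ha, b, hb, rfl⟩
  exact lie_mem_U ha hb

/-- each `u_{n,i}` is a Lie ideal of `u_n`: it is contained in `u_n`
and `[u_n, u_{n,i}] ⊆ u_{n,i}`. -/
theorem U_isLieIdeal (K : Type) [Field K] [CharZero K] (n : ℕ) (hn : 2 ≤ n)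
    (i : ℕ) (h1 : 1 ≤ i) (h2 : i ≤ n) :
    U K n i ≤ U K n 1 ∧ lieSpan K n (U K n 1) (U K n i) ≤ U K n i :=
  U_isLieIdeal_general K n i
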